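/- arXiv:2403.13728 — 2 statements merged into one kernel-verified Lean document; each statement's English description precedes it below -/
import Mathlib

section
/- Let ℓ : Θ → ℝ, R : Θ → ℝ, let θ⁽⁰⁾,…,θ⁽ᴮ⁾ ∈ Θ and μ⁽⁰⁾ < μ⁽¹⁾ < ⋯ < μ⁽ᴮ⁾ be reals with μ⁽⁰⁾ ≥ 0. Suppose for all k = 0,…,B−1: ℓ(θ⁽ᵏ⁺¹⁾) + μ⁽ᵏ⁺¹⁾·R(θ⁽ᵏ⁺¹⁾) ≤ ℓ(θ⁽ᵏ⁾) + μ⁽ᵏ⁺¹⁾·R(θ⁽ᵏ⁾). Define K₊ = {k : ℓ(θ⁽ᵏ⁺¹⁾) + μ⁽ᵏ⁾·R(θ⁽ᵏ⁺¹⁾) ≥ ℓ(θ⁽ᵏ⁾) + μ⁽ᵏ⁾·R(θ⁽ᵏ⁾)} and K₋ its complement in {0,…,B−1}. Then ℓ(θ⁽ᴮ⁾) ≤ ℓ(θ⁽⁰⁾) + Σ_{k∈K₊} μ⁽ᵏ⁺¹⁾·(R(θ⁽ᵏ⁾) − R(θ⁽ᵏ⁺¹⁾)) + Σ_{k∈K₋}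 μ⁽ᵏ⁾·(R(θ⁽ᵏ⁾) − R(θ⁽ᵏ⁺¹⁾)). -/
theorem ellbound {Θ : Type*} (ℓ R : Θ → ℝ) (B : ℕ) (θ : ℕ → Θ) (μ : ℕ → ℝ)
    (hμ0 : 0 ≤ μ 0)
    (hμmono : ∀ k < B, μ k < μ (k + 1))
    (hdesc : ∀ k < B, ℓ (θ (k + 1)) + μ (k + 1) * R (θ (k + 1)) ≤ ℓ (θ k) + μ (k + 1) * R (θ k)) :
    ℓ (θ B) ≤ ℓ (θ 0)
      + ∑ k ∈ (Finset.range B).filter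
          (fun k => ℓ (θ (k + 1)) + μ k * R (θ (k + 1)) ≥ ℓ (θ k) + μ k * R (θ k)),
          μ (k + 1) * (R (θ k) - R (θ (k + 1)))
      + ∑ k ∈ (Finset.range B).filter
          (fun k => ¬ (ℓ (θ (k + 1)) + μ k * R (θ (k + 1)) ≥ ℓ (θ k) + μ k * R (θ k))),
          μ k * (R (θ k) - R (θ (k + 1))) := by
  set P : ℕ → Prop := fun k => ℓ (θ (k + 1)) + μ k * R (θ (k + 1)) ≥ ℓ (θ k) + μ k * R (θ k)
    with hP
  have hsplit :
      (∑ k ∈ (Finset.range B).filter (fun k => P k), μ (k + 1) * (R (θ k) - R (θ (k + 1))))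
      + ∑ k ∈ (Finset.range B).filter (fun k => ¬ P k), μ k * (R (θ k) - R (θ (k + 1)))
      = ∑ k ∈ Finset.range B,
          if P k then μ (k + 1) * (R (θ k) - R (θ (k + 1)))
          else μ k * (R (θ k) - R (θ (k + 1))) := by
    rw [Finset.sum_ite]
  have htel : ℓ (θ B) - ℓ (θ 0) = ∑ k ∈ Finset.range B, (ℓ (θ (k + 1)) - ℓ (θ k)) :=
    (Finset.sum_range_sub (fun k => ℓ (θ k)) B).symm
  have hbound : ∀ k ∈ Finset.range B,
      ℓ (θ (k + 1)) - ℓ (θ k) ≤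
        if P k then μ (k + 1) * (R (θ k) - R (θ (k + 1)))
        else μ k * (R (θ k) - R (θ (k + 1))) := by
    intro k hk
    rw [Finset.mem_range] at hk
    by_cases h : P k
    · rw [if_pos h]
      have := hdesc k hk
      nlinarith [this]
    · rw [if_neg h]
      rw [hP] at h
      push_neg at h
      nlinarith [h]
  have := Finset.sum_le_sum hbound
  rw [← htel] at this
  linarith [hsplit ▸ this, hsplit]
end

section
/- With the setpoint sequence b⁽ᵏ⁾ defined as above (b⁽⁰⁾ = ρ·R(θ⁽⁰⁾); b⁽ᵏ⁾ updates to R(θ⁽ᵏ⁾) whenever R(θ⁽ᵏ⁾) ⪯ b⁽ᵏ⁻¹⁾ and ℓ(θ⁽ᵏ⁾) < min_{j<k} ℓ(θ⁽ʲ⁾), else stays b⁽ᵏ⁻¹⁾): if the setpoint strictly changes at two indices k₁ < k₂ (i.e., b⁽ᵏ¹⁾ ≠ b⁽ᵏ¹⁻¹⁾ and b⁽ᵏ²⁾ ≠ b⁽ᵏ²⁻¹⁾), then θ⁽ᵏ²⁾ Pareto-dominates-or-equals θ⁽ᵏ¹⁾ in the regularizers and strictly improves ℓ: R(θ⁽ᵏ²⁾)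 ⪯ R(θ⁽ᵏ¹⁾) and ℓ(θ⁽ᵏ²⁾) < ℓ(θ⁽ᵏ¹⁾). -/
theorem setpoint_shrink_pareto_descent {Θ : Type*} {d : ℕ} (ℓ : Θ → ℝ) (R : Θ → Fin d → ℝ)
    (θ : ℕ → Θ) (ρ : ℝ) (hρ0 : 0 < ρ) (hρ1 : ρ < 1)
    (b : ℕ → Fin d → ℝ)
    (hb0 : b 0 = fun i => ρ * R (θ 0) i)
    (hrec : ∀ k, 1 ≤ k →
      ((R (θ k) ≤ b (k - 1) ∧ (∀ j < k, ℓ (θ k) < ℓ (θ j)) ∧ b k = R (θ k)) ∨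
       (¬ (R (θ k) ≤ b (k - 1) ∧ ∀ j < k, ℓ (θ k) < ℓ (θ j)) ∧ b k = b (k - 1))))
    (k₁ k₂ : ℕ) (hk₁ : 1 ≤ k₁) (hk : k₁ < k₂)
    (hchange₁ : b k₁ ≠ b (k₁ - 1)) (hchange₂ : b k₂ ≠ b (k₂ - 1)) :
    R (θ k₂) ≤ R (θ k₁) ∧ ℓ (θ k₂) < ℓ (θ k₁) := by
  -- step lemma: b (k) ≤ b (k-1) for k ≥ 1
  have step : ∀ k, 1 ≤ k → b k ≤ b (k - 1) := by
    intro k hk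
    rcases hrec k hk with ⟨h1, _, h3⟩ | ⟨_, h2⟩
    · rw [h3]; exact h1
    · rw [h2]
  -- monotone: m ≤ n → b n ≤ b m
  have mono : ∀ m n, m ≤ n → b n ≤ b m := by
    intro m n hmn
    induction n with
    | zero => simp_all
    | succ n ih =>
      rcases Nat.lt_or_ge m (n + 1) with h | h
      · have := step (n + 1) (Nat.succ_le_succ (Nat.zero_le n))
        simp only [Nat.add_sub_cancel] at this
        exact le_trans this (ih (Nat.lt_succ_iff.mp h))
      · have : m = n + 1 := le_antisymm hmn h
        subst this; exact le_refl _
  -- at k₁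
  have h1 := hrec k₁ hk₁
  have hb1 : b k₁ = R (θ k₁) := by
    rcases h1 with ⟨_, _, h⟩ | ⟨_, h⟩
    · exact h
    · exact absurd h hchange₁
  -- at k₂
  have hk₂ : 1 ≤ k₂ := le_trans hk₁ (le_of_lt hk)
  have h2 := hrec k₂ hk₂
  rcases h2 with ⟨hR, hℓ, hb2⟩ | ⟨_, h⟩
  · constructor
    · calc R (θ k₂) ≤ b (k₂ - 1) := hR
        _ ≤ b k₁ := mono k₁ (k₂ - 1) (Nat.le_sub_one_of_lt hk)
        _ = R (θ k₁) := hb1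
    · exact hℓ k₁ hk
  · exact absurd h hchange₂
end
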